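/- Assume: (a) A is countably spanned, i.e. there is a countable subset of A whose ℂ-linear span is all of A; (b) π has no nonzero invariant vector, i.e. the only ξ ∈ H with π(a)ξ = ε(a)ξ for all a ∈ A is ξ = 0; and (c) every 1-cocycle c : A → H that is a pointwise limit of a sequence of inner cocycles (i.e. for which there is a sequence (ξ_n) in H with π(a)ξ_n − ε(a)ξ_n → c(a) for every a ∈ A) is itself inner. Then there exist a finite set S ⊆ A and δ > 0 such that for every ξ ∈ H one has max_{a ∈ S} ‖π(a)ξ − ε(a)ξ‖ ≥ δ‖ξ‖; in other words, π does not have almost invariant vectors. -/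

import Mathlib

/-!
Enumerate a spanning sequence `aᵢ` of `A` and put `Dᵢ = π(aᵢ) - ε(aᵢ)`. The operator
`T : H → ℓ^∞(ℕ, H)`, `(Tξ)ᵢ = 2⁻ⁱ (1 + ‖Dᵢ‖)⁻¹ Dᵢ ξ`, is bounded; it is injective because `π` has
no invariant vectors, and its range is closed because a coordinatewise limit of the `Dᵢ ξₙ`
extends by linearity to a pointwise limit of inner cocycles on all of `A`, which is inner by
assumption. By the open mapping theorem `c ‖ξ‖ ≤ ‖Tξ‖`, and since the coordinates of `T` past some
`N` are uniformly smaller than `c ‖ξ‖ / 2`, one of `D₀ ξ, …, D_N ξ` has norm at least `c ‖ξ‖ / 2`.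
-/

open Filter Topology
open scoped ENNReal

section WeightedStack

variable {𝕜 E F : Type*} [RCLike 𝕜] [NormedAddCommGroup E] [NormedSpace 𝕜 E]
  [NormedAddCommGroup F] [NormedSpace 𝕜 F]

noncomputable def stackWeight (D : ℕ → E →L[𝕜] F) (i : ℕ) : 𝕜 :=
  ((2 ^ i * (1 + ‖D i‖))⁻¹ : ℝ)

lemma stackWeight_ne_zero (D : ℕ → E →L[𝕜] F) (i : ℕ) : stackWeight D i ≠ 0 := by
  simp only [stackWeight, ne_eq, RCLike.ofReal_eq_zero, inv_eq_zero]
  positivity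

lemma norm_stackWeight (D : ℕ → E →L[𝕜] F) (i : ℕ) :
    ‖stackWeight D i‖ = (2 ^ i * (1 + ‖D i‖))⁻¹ := by
  rw [stackWeight, RCLike.norm_ofReal, abs_of_pos (by positivity)]

lemma norm_stackWeight_smul_le_norm (D : ℕ → E →L[𝕜] F) (i : ℕ) (x : E) :
    ‖stackWeight D i • D i x‖ ≤ ‖D i x‖ := by
  rw [norm_smul, norm_stackWeight]
  refine mul_le_of_le_one_left (norm_nonneg _) (inv_le_one_of_one_le₀ ?_)
  exact one_le_mul_of_one_le_of_one_le (one_le_pow₀ one_le_two)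
    (le_add_of_nonneg_right (norm_nonneg _))

lemma norm_stackWeight_smul_le_pow (D : ℕ → E →L[𝕜] F) (i : ℕ) (x : E) :
    ‖stackWeight D i • D i x‖ ≤ (1 / 2) ^ i * ‖x‖ := by
  rw [norm_smul, norm_stackWeight, mul_inv, one_div, inv_pow, mul_assoc]
  gcongr
  rw [inv_mul_le_iff₀ (by positivity)]
  nlinarith [(D i).le_opNorm x, norm_nonneg x]

lemma norm_stackWeight_smul_le (D : ℕ → E →L[𝕜] F) (i : ℕ) (x : E) :
    ‖stackWeight D i • D i x‖ ≤ ‖x‖ :=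
  (norm_stackWeight_smul_le_pow D i x).trans
    (mul_le_of_le_one_left (norm_nonneg x) (pow_le_one₀ (by norm_num) (by norm_num)))

noncomputable def weightedStack (D : ℕ → E →L[𝕜] F) : E →L[𝕜] lp (fun _ : ℕ => F) ∞ :=
  LinearMap.mkContinuous
    { toFun := fun x => ⟨fun i => stackWeight D i • D i x, memℓp_infty ⟨‖x‖, by
        rintro _ ⟨i, rfl⟩
        exact norm_stackWeight_smul_le D i x⟩⟩
      map_add' := fun x y => lp.ext <| funext fun i => by simp only [map_add, smul_add]; rfl
      map_smul' := fun c x => by ext i; simp [smul_comm c] }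
    1 fun x => by
      rw [one_mul]
      exact lp.norm_le_of_forall_le (norm_nonneg x) fun i => norm_stackWeight_smul_le D i x

lemma weightedStack_apply (D : ℕ → E →L[𝕜] F) (x : E) (i : ℕ) :
    weightedStack D x i = stackWeight D i • D i x := rfl

lemma injective_weightedStack {D : ℕ → E →L[𝕜] F} (hD : ∀ x, (∀ i, D i x = 0) → x = 0) :
    Function.Injective (weightedStack D) := by
  refine (injective_iff_map_eq_zero _).mpr fun x hx => hD x fun i => ?_
  have hi : stackWeight D i • D i x = 0 := by
    rw [← weightedStack_apply, hx]
    rfl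
  exact (smul_eq_zero.mp hi).resolve_left (stackWeight_ne_zero D i)

lemma isClosed_range_weightedStack {D : ℕ → E →L[𝕜] F}
    (hD : ∀ (x : ℕ → E) (y : ℕ → F), (∀ i, Tendsto (fun n => D i (x n)) atTop (𝓝 (y i))) →
      ∃ z, ∀ i, D i z = y i) :
    IsClosed (Set.range (weightedStack D)) := by
  refine isSeqClosed_iff_isClosed.mp fun u v hu hv => ?_
  choose x hx using hu
  have hlim : ∀ i, Tendsto (fun n => D i (x n)) atTop (𝓝 ((stackWeight D i)⁻¹ • v i)) := by
    intro i
    have hcoord : Tendsto (fun n => u n i) atTop (𝓝 (v i)) :=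
      ((lp.evalCLM 𝕜 (fun _ : ℕ => F) ∞ i).continuous.tendsto v).comp hv
    refine (hcoord.const_smul (stackWeight D i)⁻¹).congr fun n => ?_
    rw [← hx n, weightedStack_apply, inv_smul_smul₀ (stackWeight_ne_zero D i)]
  obtain ⟨z, hz⟩ := hD x _ hlim
  refine ⟨z, lp.ext (funext fun i => ?_)⟩
  rw [weightedStack_apply, hz, smul_inv_smul₀ (stackWeight_ne_zero D i)]

theorem exists_bounded_below_of_injective_of_isClosed_range [CompleteSpace E] [CompleteSpace F]
    {D : ℕ → E →L[𝕜] F} (hinj : ∀ x, (∀ i, D i x = 0) → x = 0)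
    (hclosed : ∀ (x : ℕ → E) (y : ℕ → F),
      (∀ i, Tendsto (fun n => D i (x n)) atTop (𝓝 (y i))) → ∃ z, ∀ i, D i z = y i) :
    ∃ N, ∃ δ > 0, ∀ x, ∃ i ≤ N, δ * ‖x‖ ≤ ‖D i x‖ := by
  obtain ⟨c, hc, hbelow⟩ := antilipschitzWith_iff_exists_mul_le_norm.mp <|
    (weightedStack D).antilipschitz_of_injective_of_isClosed_range
      (injective_weightedStack hinj) (isClosed_range_weightedStack hclosed)
  obtain ⟨N, hN⟩ := exists_pow_lt_of_lt_one (half_pos hc) one_half_lt_one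
  refine ⟨N, c / 2, half_pos hc, fun x => ?_⟩
  by_contra! hsmall
  have hstack : ‖weightedStack D x‖ ≤ c / 2 * ‖x‖ := by
    refine lp.norm_le_of_forall_le (by positivity) fun i => ?_
    rcases le_or_gt i N with hi | hi
    · exact (norm_stackWeight_smul_le_norm D i x).trans (hsmall i hi).le
    · calc ‖stackWeight D i • D i x‖ ≤ (1 / 2) ^ i * ‖x‖ := norm_stackWeight_smul_le_pow D i x
        _ ≤ (1 / 2) ^ N * ‖x‖ :=
          mul_le_mul_of_nonneg_right (pow_le_pow_of_le_one (by norm_num) (by norm_num) hi.le)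
            (norm_nonneg x)
        _ ≤ c / 2 * ‖x‖ := by gcongr
  nlinarith [hbelow x, hsmall 0 N.zero_le, norm_nonneg (D 0 x)]

end WeightedStack

theorem exists_tendsto_of_mem_span {R M F ι : Type*} [Semiring R] [AddCommMonoid M] [Module R M]
    [AddCommMonoid F] [Module R F] [TopologicalSpace F] [ContinuousAdd F] [ContinuousConstSMul R F]
    {l : Filter ι} (c : ι → M →ₗ[R] F) {s : Set M}
    (hs : ∀ m ∈ s, ∃ L, Tendsto (fun n => c n m) l (𝓝 L)) {m : M} (hm : m ∈ Submodule.span R s) :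
    ∃ L, Tendsto (fun n => c n m) l (𝓝 L) := by
  induction hm using Submodule.span_induction with
  | mem m hm => exact hs m hm
  | zero => exact ⟨0, by simpa using tendsto_const_nhds⟩
  | add m m' _ _ h h' =>
    obtain ⟨L, hL⟩ := h
    obtain ⟨L', hL'⟩ := h'
    exact ⟨L + L', by simpa using hL.add hL'⟩
  | smul r m _ h =>
    obtain ⟨L, hL⟩ := h
    exact ⟨r • L, by simpa using hL.const_smul r⟩

section Cocycle

variable {𝕜 A H : Type*} [NormedField 𝕜] [Ring A] [Algebra 𝕜 A]
  [NormedAddCommGroup H] [NormedSpace 𝕜 H] (π : A →ₐ[𝕜] (H →L[𝕜] H)) (ε : A →ₐ[𝕜] 𝕜)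

def IsCocycle (c : A →ₗ[𝕜] H) : Prop :=
  ∀ x y, c (x * y) = π x (c y) + ε y • c x

def coboundary (a : A) : H →L[𝕜] H :=
  π a - ε a • ContinuousLinearMap.id 𝕜 H

@[simp]
lemma coboundary_apply (a : A) (ξ : H) : coboundary π ε a ξ = π a ξ - ε a • ξ := rfl

def innerCocycle (ξ : H) : A →ₗ[𝕜] H where
  toFun a := coboundary π ε a ξ
  map_add' x y := by simp only [coboundary_apply, map_add, add_apply, add_smul]; abel
  map_smul' r x := by simp [smul_sub, smul_smul]

@[simp]
lemma innerCocycle_apply (ξ : H) (a : A) : innerCocycle π ε ξ a = π a ξ - ε a • ξ := rfl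

lemma isCocycle_innerCocycle (ξ : H) : IsCocycle π ε (innerCocycle π ε ξ) := by
  intro x y
  simp only [innerCocycle_apply, map_mul, mul_apply_eq_comp, map_sub, map_smul,
    smul_sub, smul_smul, mul_comm (ε x)]
  abel

lemma IsCocycle.of_tendsto {ξ : ℕ → H} {c : A →ₗ[𝕜] H}
    (hc : ∀ a, Tendsto (fun n => innerCocycle π ε (ξ n) a) atTop (𝓝 (c a))) :
    IsCocycle π ε c := fun x y =>
  tendsto_nhds_unique (hc (x * y)) <| by
    simpa only [isCocycle_innerCocycle π ε _ x y, Function.comp_def] using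
      (((π x).continuous.tendsto _).comp (hc y)).add ((hc x).const_smul (ε y))

variable {π ε}

lemma eq_zero_of_coboundary_eq_zero {f : ℕ → A} (hf : Submodule.span 𝕜 (Set.range f) = ⊤)
    (hnoinv : ∀ ξ : H, (∀ a : A, π a ξ = ε a • ξ) → ξ = 0) {ξ : H}
    (hξ : ∀ i, coboundary π ε (f i) ξ = 0) : ξ = 0 :=
  hnoinv ξ fun a => sub_eq_zero.mp <|
    LinearMap.congr_fun (LinearMap.ext_on_range (f := innerCocycle π ε ξ) (g := 0) hf hξ) a

lemma exists_coboundary_eq_of_tendsto {f : ℕ → A} (hf : Submodule.span 𝕜 (Set.range f) = ⊤)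
    (hclosed : ∀ c : A →ₗ[𝕜] H, IsCocycle π ε c →
      (∃ ξ : ℕ → H, ∀ a, Tendsto (fun n => innerCocycle π ε (ξ n) a) atTop (𝓝 (c a))) →
      ∃ ζ, ∀ a, c a = innerCocycle π ε ζ a)
    {ξ y : ℕ → H} (hy : ∀ i, Tendsto (fun n => coboundary π ε (f i) (ξ n)) atTop (𝓝 (y i))) :
    ∃ ζ, ∀ i, coboundary π ε (f i) ζ = y i := by
  choose L hL using fun a => exists_tendsto_of_mem_span (fun n => innerCocycle π ε (ξ n))
    (by rintro _ ⟨i, rfl⟩; exact ⟨y i, hy i⟩) (hf ▸ Submodule.mem_top : a ∈ Submodule.span 𝕜 _)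
  let c := linearMapOfTendsto L (fun n => innerCocycle π ε (ξ n)) (tendsto_pi_nhds.mpr hL)
  obtain ⟨ζ, hζ⟩ := hclosed c (IsCocycle.of_tendsto π ε hL) ⟨ξ, hL⟩
  exact ⟨ζ, fun i => (hζ (f i)).symm.trans (tendsto_nhds_unique (hL (f i)) (hy i))⟩

end Cocycle

theorem no_almost_invariant_vectors_of_inner_cocycles_closed
    {A : Type*} [Ring A] [Algebra ℂ A]
    {H : Type*} [NormedAddCommGroup H] [InnerProductSpace ℂ H] [CompleteSpace H]
    (π : A →ₐ[ℂ] (H →L[ℂ] H)) (ε : A →ₐ[ℂ] ℂ)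
    -- `A` is countably spanned:
    (hcount : ∃ D : Set A, D.Countable ∧ Submodule.span ℂ D = ⊤)
    -- `π` has no nonzero invariant vector:
    (hnoinv : ∀ ξ : H, (∀ a : A, π a ξ = ε a • ξ) → ξ = 0)
    -- every 1-cocycle that is a pointwise limit of inner cocycles is inner:
    (hclosed : ∀ c : A →ₗ[ℂ] H,
      (∀ x y : A, c (x * y) = π x (c y) + ε y • c x) →
      (∃ ξ : ℕ → H, ∀ a : A, Tendsto (fun n => π a (ξ n) - ε a • ξ n) atTop (𝓝 (c a))) →
      ∃ ζ : H, ∀ a : A, c a = π a ζ - ε a • ζ) :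
    ∃ S : Finset A, S.Nonempty ∧ ∃ δ : ℝ, 0 < δ ∧
      ∀ ξ : H, ∃ a ∈ S, δ * ‖ξ‖ ≤ ‖π a ξ - ε a • ξ‖ := by
  classical
  obtain ⟨D, hDc, hDspan⟩ := hcount
  obtain ⟨f, hf⟩ := (hDc.insert 0).exists_eq_range (Set.insert_nonempty 0 D)
  have hspan : Submodule.span ℂ (Set.range f) = ⊤ := by
    rw [← hf, Submodule.span_insert_zero, hDspan]
  obtain ⟨N, δ, hδ, hbelow⟩ := exists_bounded_below_of_injective_of_isClosed_range
    (fun _ => eq_zero_of_coboundary_eq_zero hspan hnoinv)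
    (fun _ _ => exists_coboundary_eq_of_tendsto hspan hclosed)
  refine ⟨(Finset.range (N + 1)).image f, by simp, δ, hδ, fun ξ => ?_⟩
  obtain ⟨i, hi, hξ⟩ := hbelow ξ
  exact ⟨f i, Finset.mem_image_of_mem f (Finset.mem_range_succ_iff.mpr hi), hξ⟩
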